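/- arXiv:2103.15198 — 3 statements merged into one kernel-verified Lean document; each statement's English description precedes it below -/
import Mathlib

section
/- Let p be a prime, n ≥ 2 an integer, and x, y, a ∈ ℚ_p with y ≠ a. If v(y - x) > 2·v(n) + v(y - a), then x - a and y - a lie in the same coset of the subgroup of n-th powers of ℚ_p^×; that is, (x - a)/(y - a) is an n-th power in ℚ_p. -/
/-! With `u = (x - a) / (y - a)` the hypothesis says `‖u - 1‖ < ‖n‖ ^ 2`. Then `1` is an approximate
root of `X ^ n - u`, whose derivative at `1` is `n`, so Hensel's lemma yields an `n`-th root of `u`. -/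

namespace PadicInt

variable {p : ℕ} [Fact p.Prime]

theorem exists_pow_eq_of_norm_sub_one_lt {n : ℕ} {u : ℤ_[p]}
    (hu : ‖u - 1‖ < ‖(n : ℤ_[p])‖ ^ 2) : ∃ z : ℤ_[p], z ^ n = u := by
  have hnorm : ‖(Polynomial.X ^ n - Polynomial.C u).eval 1‖ <
      ‖(Polynomial.X ^ n - Polynomial.C u).derivative.eval 1‖ ^ 2 := by
    simpa [Polynomial.derivative_pow, ← norm_neg (1 - u)] using hu
  obtain ⟨z, hz, -⟩ := hensels_lemma hnorm
  exact ⟨z, by simpa [sub_eq_zero] using hz⟩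

end PadicInt

namespace Padic

variable {p : ℕ} [Fact p.Prime]

theorem norm_le_one_of_norm_sub_one_lt_one {u : ℚ_[p]} (hu : ‖u - 1‖ < 1) : ‖u‖ ≤ 1 :=
  calc ‖u‖ = ‖(u - 1) + 1‖ := by rw [sub_add_cancel]
    _ ≤ max ‖u - 1‖ ‖(1 : ℚ_[p])‖ := nonarchimedean _ _
    _ ≤ 1 := by simp [hu.le]

theorem exists_pow_eq_of_norm_sub_one_lt {n : ℕ} {u : ℚ_[p]}
    (hu : ‖u - 1‖ < ‖(n : ℚ_[p])‖ ^ 2) : ∃ z : ℚ_[p], z ^ n = u := by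
  have hu_one : ‖u - 1‖ < 1 :=
    hu.trans_le (pow_le_one₀ (norm_nonneg _) (norm_int_le_one n))
  obtain ⟨z, hz⟩ := PadicInt.exists_pow_eq_of_norm_sub_one_lt
    (u := ⟨u, norm_le_one_of_norm_sub_one_lt_one hu_one⟩)
    (by rwa [PadicInt.norm_def, PadicInt.norm_def])
  exact ⟨z, by simpa using congrArg ((↑) : ℤ_[p] → ℚ_[p]) hz⟩

end Padic

theorem stmt_1_general (p : ℕ) [Fact p.Prime] (n : ℕ) (x y a : ℚ_[p])
    (h : ‖y - x‖ < ‖(n : ℚ_[p])‖ ^ 2 * ‖y - a‖) :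
    ∃ z : ℚ_[p], z ^ n = (x - a) / (y - a) := by
  have hya : 0 < ‖y - a‖ := pos_of_mul_pos_right ((norm_nonneg _).trans_lt h) (by positivity)
  apply Padic.exists_pow_eq_of_norm_sub_one_lt
  have hquot : (x - a) / (y - a) - 1 = -((y - x) / (y - a)) := by
    field_simp [norm_pos_iff.mp hya]
    ring
  rwa [hquot, norm_neg, norm_div, div_lt_iff₀ hya]

/-- Haskell–Macpherson Lemma 2.3: if `v(y - x) > 2·v(n) + v(y - a)` then
`(x - a)/(y - a)` is an `n`-th power in `ℚ_p`. -/
theorem stmt_1 (p : ℕ) [Fact p.Prime] (n : ℕ) (hn : 2 ≤ n) (x y a : ℚ_[p])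
    (hya : y ≠ a) (h : ‖y - x‖ < ‖(n : ℚ_[p])‖ ^ 2 * ‖y - a‖) :
    ∃ z : ℚ_[p], z ^ n = (x - a) / (y - a) :=
  stmt_1_general p n x y a h
end

section
/- Let p be a prime, λ ∈ ℚ_p^×, n ≥ 2, γ₁ < γ₂ in ℤ ∪ {−∞, +∞}, and let X = {x ∈ ℚ_p : γ₁ < v(x) < γ₂ and λ·x is a nonzero n-th power}. If X is not contained in any ball B_{−m}(0) for m ∈ ℕ (i.e. the valuation is unbounded below on X), then for every k ∈ ℕ, X contains a ball of radius −k, i.e. there exists a ∈ X with {x : v(x − a) > −k} ⊆ X. -/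
/-- The ball `B_γ(a) = {x : v(x - a) > γ}` in `ℚ_p`. -/
def pBall (p : ℕ) [Fact p.Prime] (γ : ℤ) (a : ℚ_[p]) : Set ℚ_[p] :=
  {x : ℚ_[p] | ‖x - a‖ < (p : ℝ) ^ (-γ)}

/-- The cell `{x ∈ ℚ_p : γ₁ < v(x) < γ₂ ∧ P_n(λ·x)}`, where `γ₁, γ₂ ∈ ℤ ∪ {−∞, +∞}`
and `P_n(z)` means `z` is a nonzero `n`-th power. -/
def pCell (p : ℕ) [Fact p.Prime] (γ₁ γ₂ : WithBot (WithTop ℤ)) (lam : ℚ_[p]) (n : ℕ) :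
    Set ℚ_[p] :=
  {x : ℚ_[p] | x ≠ 0 ∧ γ₁ < ((x.valuation : WithTop ℤ) : WithBot (WithTop ℤ)) ∧
    ((x.valuation : WithTop ℤ) : WithBot (WithTop ℤ)) < γ₂ ∧
    ∃ z : ℚ_[p], z ≠ 0 ∧ z ^ n = lam * x}

/-!
Choose `c` with `p ^ (-c) ≤ ‖n‖²` and, by unboundedness, a point `a` of the cell with
`‖a‖ ≥ p ^ (k + c)`. Every `x` with `‖x - a‖ < p ^ k` is `a (1 + u)` with `‖u‖ < ‖n‖²`; by Hensel's
lemma applied to `X ^ n - (1 + u)` at `1`, the factor `1 + u` is a nonzero `n`-th power, and it is a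
unit, so `x` has the valuation of `a` and `lam * x` is again an `n`-th power.
-/

namespace PadicInt

variable {p : ℕ} [Fact p.Prime]

theorem exists_pow_eq_one_add {n : ℕ} {u : ℤ_[p]} (hu : ‖u‖ < ‖(n : ℤ_[p])‖ ^ 2) :
    ∃ z : ℤ_[p], z ^ n = 1 + u := by
  set F : Polynomial ℤ_[p] := Polynomial.X ^ n - Polynomial.C (1 + u)
  have hF : F.aeval 1 = -u := by simp [F]
  have hF' : F.derivative.aeval 1 = (n : ℤ_[p]) := by simp [F, Polynomial.derivative_pow]
  obtain ⟨z, hz, -⟩ := hensels_lemma (F := F) (a := 1) (by rwa [hF, hF', norm_neg])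
  exact ⟨z, sub_eq_zero.mp (by simpa [F] using hz)⟩

end PadicInt

namespace Padic

variable {p : ℕ} [Fact p.Prime]

theorem norm_natCast_sq_le_one (n : ℕ) : ‖(n : ℚ_[p])‖ ^ 2 ≤ 1 :=
  pow_le_one₀ (norm_nonneg _) (IsUltrametricDist.norm_natCast_le_one ℚ_[p] n)

theorem exists_ne_zero_pow_eq_one_add {n : ℕ} {u : ℚ_[p]} (hu : ‖u‖ < ‖(n : ℚ_[p])‖ ^ 2) :
    ∃ z : ℚ_[p], z ≠ 0 ∧ z ^ n = 1 + u := by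
  have hn : n ≠ 0 := by rintro rfl; simp at hu; exact (norm_nonneg u).not_gt hu
  have hu1 : ‖u‖ < 1 :=
    hu.trans_le (norm_natCast_sq_le_one n)
  obtain ⟨z, hz⟩ := PadicInt.exists_pow_eq_one_add (u := ⟨u, hu1.le⟩) <| by
    rwa [PadicInt.norm_def, PadicInt.coe_natCast]
  have hz' : (z : ℚ_[p]) ^ n = 1 + u := by
    have := congrArg ((↑) : ℤ_[p] → ℚ_[p]) hz
    push_cast at this
    exact this
  have h1u : ‖1 + u‖ = 1 := by
    simpa using norm_eq_of_norm_sub_lt_right (z1 := 1 + u) (z2 := 1) (by simpa using hu1)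
  refine ⟨z, fun h0 => ?_, hz'⟩
  rw [h0, zero_pow hn] at hz'
  simp [← hz'] at h1u

theorem valuation_eq_of_norm_eq {x y : ℚ_[p]} (hx : x ≠ 0) (hy : y ≠ 0) (h : ‖x‖ = ‖y‖) :
    x.valuation = y.valuation := by
  rw [norm_eq_zpow_neg_valuation hx, norm_eq_zpow_neg_valuation hy] at h
  have hp : (1 : ℝ) < p := mod_cast (Fact.out : p.Prime).one_lt
  exact neg_inj.mp ((zpow_right_strictMono₀ hp).injective h)

end Padic

section Cell

variable {p : ℕ} [Fact p.Prime] {γ₁ γ₂ : WithBot (WithTop ℤ)} {lam : ℚ_[p]} {n : ℕ}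

theorem mem_pCell_of_norm_sub_lt {a x : ℚ_[p]} (ha : a ∈ pCell p γ₁ γ₂ lam n)
    (hx : ‖x - a‖ < ‖(n : ℚ_[p])‖ ^ 2 * ‖a‖) : x ∈ pCell p γ₁ γ₂ lam n := by
  obtain ⟨ha0, hγ₁, hγ₂, z, hz0, hz⟩ := ha
  have ha_pos : 0 < ‖a‖ := norm_pos_iff.mpr ha0
  have hxa : ‖x‖ = ‖a‖ := Padic.norm_eq_of_norm_sub_lt_right <|
    hx.trans_le (mul_le_of_le_one_left ha_pos.le (Padic.norm_natCast_sq_le_one n))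
  have hx0 : x ≠ 0 := norm_pos_iff.mp (hxa ▸ ha_pos)
  have hval := Padic.valuation_eq_of_norm_eq hx0 ha0 hxa
  obtain ⟨w, hw0, hw⟩ := Padic.exists_ne_zero_pow_eq_one_add (n := n) (u := (x - a) / a) <| by
    rwa [norm_div, div_lt_iff₀ ha_pos]
  refine ⟨hx0, hval ▸ hγ₁, hval ▸ hγ₂, z * w, mul_ne_zero hz0 hw0, ?_⟩
  rw [mul_pow, hz, hw]
  field_simp
  ring

theorem pBall_subset_pCell {a : ℚ_[p]} (ha : a ∈ pCell p γ₁ γ₂ lam n) {γ : ℤ}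
    (hγ : (p : ℝ) ^ (-γ) ≤ ‖(n : ℚ_[p])‖ ^ 2 * ‖a‖) : pBall p γ a ⊆ pCell p γ₁ γ₂ lam n :=
  fun _ hx => mem_pCell_of_norm_sub_lt ha (lt_of_lt_of_le hx hγ)

end Cell

theorem stmt_5_general (p : ℕ) [Fact p.Prime] (lam : ℚ_[p]) (n : ℕ) (hn : 2 ≤ n)
    (γ₁ γ₂ : WithBot (WithTop ℤ))
    (hunb : ∀ m : ℕ, ¬ (pCell p γ₁ γ₂ lam n ⊆ pBall p (-(m : ℤ)) 0)) :
    ∀ k : ℕ, ∃ a ∈ pCell p γ₁ γ₂ lam n, pBall p (-(k : ℤ)) a ⊆ pCell p γ₁ γ₂ lam n := by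
  intro k
  have hp : (1 : ℝ) < p := mod_cast (Fact.out : p.Prime).one_lt
  obtain ⟨c, hc⟩ : ∃ c : ℕ, (p : ℝ) ^ (-(c : ℤ)) ≤ ‖(n : ℚ_[p])‖ ^ 2 := by
    have hn0 : (n : ℚ_[p]) ≠ 0 := Nat.cast_ne_zero.mpr (by omega)
    obtain ⟨c, hc⟩ := exists_pow_lt_of_lt_one (x := ‖(n : ℚ_[p])‖ ^ 2) (by positivity)
      (inv_lt_one_of_one_lt₀ hp)
    exact ⟨c, by simpa [zpow_neg] using hc.le⟩
  obtain ⟨a, ha, ha_far⟩ := Set.not_subset.mp (hunb (k + c))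
  have ha_norm : (p : ℝ) ^ ((k + c : ℕ) : ℤ) ≤ ‖a‖ := by simpa [pBall] using ha_far
  refine ⟨a, ha, pBall_subset_pCell ha ?_⟩
  calc (p : ℝ) ^ (-(-(k : ℤ))) = (p : ℝ) ^ (-(c : ℤ)) * (p : ℝ) ^ ((k + c : ℕ) : ℤ) := by
        rw [← zpow_add₀ (by positivity)]; push_cast; ring_nf
    _ ≤ ‖(n : ℚ_[p])‖ ^ 2 * ‖a‖ := by gcongr

/-- If a cell `X` is not contained in any ball `B_{-m}(0)` (the valuation is unbounded
below on `X`), then for every `k` the cell `X` contains a ball of radius `-k`. -/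
theorem stmt_5 (p : ℕ) [Fact p.Prime] (lam : ℚ_[p]) (hlam : lam ≠ 0) (n : ℕ) (hn : 2 ≤ n)
    (γ₁ γ₂ : WithBot (WithTop ℤ)) (hγ : γ₁ < γ₂)
    (hunb : ∀ m : ℕ, ¬ (pCell p γ₁ γ₂ lam n ⊆ pBall p (-(m : ℤ)) 0)) :
    ∀ k : ℕ, ∃ a ∈ pCell p γ₁ γ₂ lam n, pBall p (-(k : ℤ)) a ⊆ pCell p γ₁ γ₂ lam n :=
  stmt_5_general p lam n hn γ₁ γ₂ hunb
end

section
/- Let p be a prime and n ≥ 1. The quotient group ℚ_p^× / (ℚ_p^×)^n is finite. -/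
/-!
By Hensel's lemma every unit within `‖n‖²` of `1` is an `n`-th power, so the subgroup of `n`-th
powers is open in `ℚ_[p]ˣ` and the quotient is discrete. Multiplying by a power `p ^ (n * q)`
moves any unit into the compact annulus `p⁻ⁿ ≤ ‖x‖ ≤ 1`, so the quotient is the image of a
compact set, hence finite.
-/

open Topology Set

theorem Subgroup.finite_quotient_of_isOpen_of_isCompact {G : Type*} [Group G] [TopologicalSpace G]
    [SeparatelyContinuousMul G] {H : Subgroup G} {K : Set G} (hH : IsOpen (H : Set G))
    (hK : IsCompact K) (hKH : ∀ g : G, ∃ k ∈ K, (k : G ⧸ H) = g) : Finite (G ⧸ H) := by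
  have := QuotientGroup.discreteTopology hH
  have hKimage : (QuotientGroup.mk '' K : Set (G ⧸ H)) = univ :=
    eq_univ_of_forall fun x => QuotientGroup.induction_on x hKH
  exact Finite.of_finite_univ (hKimage ▸ (hK.image continuous_quotient_mk').finite_of_discrete)

theorem Units.isCompact_setOf_norm_mem_Icc {𝕜 : Type*} [NormedField 𝕜] [ProperSpace 𝕜]
    {r R : ℝ} (hr : 0 < r) : IsCompact {u : 𝕜ˣ | ‖(u : 𝕜)‖ ∈ Icc r R} := by
  rw [Units.isEmbedding_val₀.isCompact_iff]
  have himage : ((↑) '' {u : 𝕜ˣ | ‖(u : 𝕜)‖ ∈ Icc r R} : Set 𝕜) = norm ⁻¹' Icc r R := by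
    ext x
    refine ⟨?_, fun hx => ⟨Units.mk0 x (norm_pos_iff.1 (hr.trans_le hx.1)), hx, rfl⟩⟩
    rintro ⟨u, hu, rfl⟩
    exact hu
  rw [himage]
  exact Metric.isCompact_of_isClosed_isBounded (isClosed_Icc.preimage continuous_norm)
    ((Metric.isBounded_closedBall (x := 0) (r := R)).subset fun x hx => by simpa using hx.2)

theorem PadicInt.exists_pow_eq_of_norm_sub_one_lt_s10 {p : ℕ} [Fact p.Prime] {n : ℕ} {a : ℤ_[p]}
    (h : ‖a - 1‖ < ‖(n : ℤ_[p])‖ ^ 2) : ∃ z : ℤ_[p], z ^ n = a := by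
  have hnorm : ‖(Polynomial.X ^ n - Polynomial.C a).aeval (1 : ℤ_[p])‖ <
      ‖(Polynomial.X ^ n - Polynomial.C a).derivative.aeval (1 : ℤ_[p])‖ ^ 2 := by
    simpa [Polynomial.derivative_X_pow, ← norm_neg (a - 1)] using h
  obtain ⟨z, hz, -⟩ := hensels_lemma hnorm
  exact ⟨z, by simpa [sub_eq_zero] using hz⟩

theorem Padic.exists_pow_eq_of_norm_sub_one_lt_s10 {p : ℕ} [Fact p.Prime] {n : ℕ} {a : ℚ_[p]}
    (h : ‖a - 1‖ < ‖(n : ℚ_[p])‖ ^ 2) : ∃ z : ℚ_[p], z ^ n = a := by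
  have hn : ‖(n : ℚ_[p])‖ ^ 2 ≤ 1 := pow_le_one₀ (norm_nonneg _) (Padic.norm_int_le_one n)
  have ha : ‖a‖ ≤ 1 := by
    simpa using (Padic.nonarchimedean (a - 1) 1).trans (max_le (h.trans_le hn).le norm_one.le)
  obtain ⟨z, hz⟩ := PadicInt.exists_pow_eq_of_norm_sub_one_lt_s10 (a := ⟨a, ha⟩) (n := n) h
  exact ⟨z, by simpa using congrArg ((↑) : ℤ_[p] → ℚ_[p]) hz⟩

theorem Padic.isOpen_range_powMonoidHom {p : ℕ} [Fact p.Prime] {n : ℕ} (hn : n ≠ 0) :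
    IsOpen ((powMonoidHom n : ℚ_[p]ˣ →* ℚ_[p]ˣ).range : Set ℚ_[p]ˣ) := by
  refine Subgroup.isOpen_of_mem_nhds _ (g := 1) ?_
  have hball : (↑) ⁻¹' Metric.ball (1 : ℚ_[p]) (‖(n : ℚ_[p])‖ ^ 2) ∈ 𝓝 (1 : ℚ_[p]ˣ) :=
    Units.continuous_val.continuousAt.preimage_mem_nhds
      (Metric.ball_mem_nhds _ (by have : (n : ℚ_[p]) ≠ 0 := Nat.cast_ne_zero.2 hn; positivity))
  refine Filter.mem_of_superset hball fun u hu => ?_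
  obtain ⟨z, hz⟩ := Padic.exists_pow_eq_of_norm_sub_one_lt_s10 (by simpa [dist_eq_norm] using hu)
  have hz0 : z ≠ 0 := by
    rintro rfl
    exact u.ne_zero (by rw [← hz, zero_pow hn])
  exact ⟨Units.mk0 z hz0, Units.ext (by simpa using hz)⟩

theorem Padic.exists_norm_mul_zpow_mem_Icc {p : ℕ} [Fact p.Prime] {x : ℚ_[p]} (hx : x ≠ 0)
    {n : ℕ} (hn : n ≠ 0) :
    ∃ q : ℤ, ‖x * (p : ℚ_[p]) ^ (n * q)‖ ∈ Icc ((p : ℝ) ^ (-(n : ℤ))) 1 := by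
  have hp : (1 : ℝ) ≤ p := by exact_mod_cast (Fact.out : p.Prime).one_le
  have hn' : (0 : ℤ) < n := by omega
  refine ⟨-(x.valuation / n), ?_⟩
  have hnorm :
      ‖x * (p : ℚ_[p]) ^ (n * -(x.valuation / n))‖ = (p : ℝ) ^ (-(x.valuation % n)) := by
    rw [norm_mul, norm_zpow, Padic.norm_p, Padic.norm_eq_zpow_neg_valuation hx, inv_zpow',
      ← zpow_add₀ (by positivity), Int.emod_def]
    ring_nf
  rw [hnorm]
  exact ⟨zpow_le_zpow_right₀ hp (by linarith [Int.emod_lt_of_pos x.valuation hn']),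
    zpow_le_one_of_nonpos₀ hp (by linarith [Int.emod_nonneg x.valuation hn'.ne'])⟩

/-- The quotient of `ℚ_p^×` by the subgroup of `n`-th powers is finite. -/
theorem stmt_10 (p : ℕ) [Fact p.Prime] (n : ℕ) (hn : 1 ≤ n) :
    Finite ((ℚ_[p])ˣ ⧸ (powMonoidHom n : (ℚ_[p])ˣ →* (ℚ_[p])ˣ).range) := by
  have hn0 : n ≠ 0 := by omega
  have hp : (p : ℚ_[p]) ≠ 0 := Nat.cast_ne_zero.2 (Fact.out : p.Prime).ne_zero
  have hr : 0 < (p : ℝ) ^ (-(n : ℤ)) := zpow_pos (Nat.cast_pos.2 (Fact.out : p.Prime).pos) _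
  refine Subgroup.finite_quotient_of_isOpen_of_isCompact (Padic.isOpen_range_powMonoidHom hn0)
    (Units.isCompact_setOf_norm_mem_Icc (R := 1) hr) fun x => ?_
  obtain ⟨q, hq⟩ := Padic.exists_norm_mul_zpow_mem_Icc x.ne_zero hn0
  refine ⟨x * Units.mk0 (p : ℚ_[p]) hp ^ (n * q), by simpa using hq, QuotientGroup.eq.2 ?_⟩
  exact ⟨Units.mk0 (p : ℚ_[p]) hp ^ (-q), by simp only [powMonoidHom_apply]; group⟩
end
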